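/- arXiv:1901.01781 — 4 statements merged into one kernel-verified Lean document; each statement's English description precedes it below -/
import Mathlib

section
/- Let ℓ > 0, p ≥ 0, let φ : [0,ℓ] → [0,∞) be Lipschitz with φ(0) = φ(ℓ) = 0, and let w ∈ [0,ℓ] be such that φ(w) = p. Then there exists a sequence (φ_σ)_{σ>0} of C^∞ functions on [0,ℓ], all with Lipschitz constant bounded by a common constant K, converging to φ uniformly on [0,ℓ] as σ → 0⁺, and satisfying φ_σ(0) = φ_σ(ℓ) = 0 and φ_σ(w) = p for every σ > 0. -/
open Set Filter

open MeasureTheory Metric Polynomial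
open scoped Convolution

noncomputable def antider (p : ℝ[X]) : ℝ[X] := p.sum fun i a => C (a / (i+1)) * X^(i+1)

lemma antider_deriv (p : ℝ[X]) : (antider p).derivative = p := by
  unfold antider
  rw [Polynomial.sum_def, map_sum]
  have h : ∀ i ∈ p.support,
      Polynomial.derivative (C (p.coeff i / (i+1)) * X^(i+1)) = C (p.coeff i) * X^i := by
    intro i _
    rw [Polynomial.derivative_C_mul_X_pow]
    have h1 : (i + 1 : ℕ) - 1 = i := by omega
    have h2 : p.coeff i / (↑i + 1) * ↑(i + 1) = p.coeff i := by
      push_cast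
      field_simp
    rw [h1, h2]
  rw [Finset.sum_congr rfl h]
  conv_rhs => rw [← Polynomial.sum_C_mul_X_pow_eq p, Polynomial.sum_def]

lemma antider_hasDerivAt (p : ℝ[X]) (x : ℝ) :
    HasDerivAt (fun y => (antider p).eval y) (p.eval x) x := by
  have := (antider p).hasDerivAt x
  rwa [antider_deriv] at this
lemma smooth_approx (K₀ : NNReal) (f : ℝ → ℝ) (hf : LipschitzWith K₀ f)
    {σ : ℝ} (hσ : 0 < σ) :
    ∃ g : ℝ → ℝ, ContDiff ℝ (⊤ : ℕ∞) g ∧ LipschitzWith K₀ g ∧ ∀ x, |g x - f x| ≤ K₀ * σ := by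
  set ρb : ContDiffBump (0:ℝ) := ⟨σ/2, σ, by positivity, by linarith⟩ with hρb
  set ρ : ℝ → ℝ := ρb.normed volume with hρ
  have hρ_cont : Continuous ρ := (ρb.contDiff_normed (n := (⊤ : ℕ∞))).continuous
  have hρ_supp : HasCompactSupport ρ := ρb.hasCompactSupport_normed
  have hρ_nonneg : ∀ t, 0 ≤ ρ t := ρb.nonneg_normed
  have hρ_int : ∫ t, ρ t = 1 := ρb.integral_normed
  have hρ_integrable : Integrable ρ := hρ_cont.integrable_of_hasCompactSupport hρ_supp
  have hf_cont : Continuous f := hf.continuous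
  set g : ℝ → ℝ := ρ ⋆[ContinuousLinearMap.lsmul ℝ ℝ] f with hg
  have hint : ∀ x : ℝ, Integrable (fun t => ρ t * f (x - t)) := by
    intro x
    apply Continuous.integrable_of_hasCompactSupport
    · exact hρ_cont.mul (hf_cont.comp (continuous_const.sub continuous_id))
    · exact hρ_supp.mul_right
  have hgdef : ∀ x, g x = ∫ t, ρ t * f (x - t) := by
    intro x
    simp only [hg, convolution_def, ContinuousLinearMap.lsmul_apply, smul_eq_mul]
  refine ⟨g, ?_, ?_, ?_⟩
  · simpa using hρ_supp.contDiff_convolution_left (μ := volume) (ContinuousLinearMap.lsmul ℝ ℝ) (ρb.contDiff_normed (n := (⊤ : ℕ∞)))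
      (hf_cont.locallyIntegrable)

  · apply LipschitzWith.of_dist_le_mul
    intro x y
    rw [Real.dist_eq, hgdef, hgdef, ← integral_sub (hint x) (hint y)]
    have hb : ∀ t, ‖ρ t * f (x - t) - ρ t * f (y - t)‖ ≤ ρ t * (K₀ * dist x y) := by
      intro t
      rw [← mul_sub]
      rw [norm_mul, Real.norm_eq_abs, Real.norm_eq_abs, abs_of_nonneg (hρ_nonneg t)]
      apply mul_le_mul_of_nonneg_left _ (hρ_nonneg t)
      have := hf.dist_le_mul (x - t) (y - t)
      simpa [Real.dist_eq, sub_sub_sub_cancel_right] using this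
    calc |∫ t, (ρ t * f (x - t) - ρ t * f (y - t))|
        ≤ ∫ t, ρ t * (K₀ * dist x y) := by
          rw [← Real.norm_eq_abs]
          exact norm_integral_le_of_norm_le (hρ_integrable.mul_const _) (Eventually.of_forall hb)
      _ = K₀ * dist x y := by rw [integral_mul_const, hρ_int, one_mul]
      _ = K₀ * dist x y := by rw [Real.dist_eq]
  · intro x
    have hconst : ∫ t, ρ t * f x = f x := by rw [integral_mul_const, hρ_int, one_mul]
    rw [hgdef]
    have : (∫ t, ρ t * f (x - t)) - f x = ∫ t, ρ t * (f (x - t) - f x) := by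
      conv_lhs => rw [← hconst]
      rw [← integral_sub (hint x) (hρ_integrable.mul_const _)]
      simp_rw [mul_sub]
    rw [this, ← Real.norm_eq_abs]
    have hb : ∀ t, ‖ρ t * (f (x - t) - f x)‖ ≤ ρ t * (K₀ * σ) := by
      intro t
      rw [norm_mul, Real.norm_eq_abs, Real.norm_eq_abs, abs_of_nonneg (hρ_nonneg t)]
      rcases eq_or_ne (ρ t) 0 with h0 | h0
      · simp [h0]
      · apply mul_le_mul_of_nonneg_left _ (hρ_nonneg t)
        have ht : t ∈ ball (0:ℝ) σ := by
          have : t ∈ Function.support ρ := h0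
          rwa [hρ, ρb.support_normed_eq] at this
        rw [mem_ball, dist_zero_right, Real.norm_eq_abs] at ht
        calc |f (x - t) - f x| ≤ K₀ * dist (x - t) x := hf.dist_le_mul (x - t) x
          _ = K₀ * |t| := by rw [Real.dist_eq, show x - t - x = -t by ring, abs_neg]
          _ ≤ K₀ * σ := by
              apply mul_le_mul_of_nonneg_left ht.le (by positivity)
    calc ‖∫ t, ρ t * (f (x - t) - f x)‖ ≤ ∫ t, ρ t * (K₀ * σ) :=
          norm_integral_le_of_norm_le (hρ_integrable.mul_const _) (Eventually.of_forall hb)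
      _ = K₀ * σ := by rw [integral_mul_const, hρ_int, one_mul]

lemma poly_approx (K₀ : NNReal) (f : ℝ → ℝ) (hf : LipschitzWith K₀ f)
    (hsm : ∀ τ : ℝ, 0 < τ → ∃ g : ℝ → ℝ, ContDiff ℝ (⊤ : ℕ∞) g ∧ LipschitzWith K₀ g ∧
      ∀ x, |g x - f x| ≤ K₀ * τ)
    (ℓ : ℝ) (hℓ : 0 < ℓ) {σ : ℝ} (hσ : 0 < σ) :
    ∃ P : ℝ → ℝ, AnalyticOnNhd ℝ P Set.univ ∧ LipschitzOnWith (K₀ + 1) P (Icc 0 ℓ) ∧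
      ∀ x ∈ Icc 0 ℓ, |P x - f x| ≤ ((K₀ : ℝ) + ℓ) * σ := by
  obtain ⟨g, hg_smooth, hg_lip, hg_close⟩ := hsm σ hσ
  set ε : ℝ := min σ 1 with hε
  have hε_pos : 0 < ε := lt_min hσ one_pos
  have hε_le_σ : ε ≤ σ := min_le_left _ _
  have hε_le_1 : ε ≤ 1 := min_le_right _ _
  have hg_diff : Differentiable ℝ g := hg_smooth.differentiable (by simp)
  have hderiv_cont : Continuous (deriv g) := hg_smooth.continuous_deriv (by simp)
  obtain ⟨q, hq⟩ := exists_polynomial_near_of_continuousOn 0 ℓ (deriv g)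
    hderiv_cont.continuousOn ε hε_pos
  set P : ℝ → ℝ := fun x => g 0 - (antider q).eval 0 + (antider q).eval x with hP
  have hP_deriv : ∀ x, HasDerivAt P (q.eval x) x :=
    fun x => (antider_hasDerivAt q x).const_add _
  have hderiv_bound : ∀ x, ‖deriv g x‖ ≤ (K₀ : ℝ) :=
    fun x => norm_deriv_le_of_lipschitz hg_lip
  refine ⟨P, ?_, ?_, ?_⟩
  · exact (analyticOnNhd_const).add (AnalyticOnNhd.eval_polynomial (𝕜 := ℝ) (antider q))
  · apply (convex_Icc 0 ℓ).lipschitzOnWith_of_nnnorm_hasDerivWithin_le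
      (f' := fun x => q.eval x) (fun x _ => (hP_deriv x).hasDerivWithinAt)
    intro x hx
    rw [← NNReal.coe_le_coe, coe_nnnorm, NNReal.coe_add, NNReal.coe_one, Real.norm_eq_abs]
    have h1 := hderiv_bound x
    rw [Real.norm_eq_abs] at h1
    have h2 := (hq x hx).le
    have h3 : |q.eval x| - |deriv g x| ≤ |q.eval x - deriv g x| :=
      abs_sub_abs_le_abs_sub _ _
    linarith
  · intro x hx
    have hdiff_lip : LipschitzOnWith ε.toNNReal (fun y => P y - g y) (Icc 0 ℓ) := by
      apply (convex_Icc 0 ℓ).lipschitzOnWith_of_nnnorm_hasDerivWithin_le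
        (f' := fun y => q.eval y - deriv g y)
        (fun y _ => ((hP_deriv y).sub (hg_diff y).hasDerivAt).hasDerivWithinAt)
      intro y hy
      rw [← NNReal.coe_le_coe, coe_nnnorm, Real.norm_eq_abs,
        Real.coe_toNNReal _ hε_pos.le]
      exact (hq y hy).le
    have h0 : P 0 - g 0 = 0 := by simp [hP]
    have hx0 : (0:ℝ) ∈ Icc (0:ℝ) ℓ := ⟨le_refl _, hℓ.le⟩
    have := hdiff_lip.dist_le_mul x hx 0 hx0
    rw [Real.dist_eq, Real.dist_eq, h0, sub_zero, sub_zero,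
      Real.coe_toNNReal _ hε_pos.le] at this
    have hxb : |x| ≤ ℓ := by
      rw [abs_of_nonneg hx.1]; exact hx.2
    have hPg : |P x - g x| ≤ ε * ℓ := by
      calc |P x - g x| ≤ ε * |x| := this
        _ ≤ ε * ℓ := by nlinarith
    have hgf := hg_close x
    calc |P x - f x| ≤ |P x - g x| + |g x - f x| := abs_sub_le _ _ _
      _ ≤ ε * ℓ + (K₀ : ℝ) * σ := add_le_add hPg hgf
      _ ≤ ((K₀ : ℝ) + ℓ) * σ := by nlinarith [K₀.coe_nonneg]

set_option maxHeartbeats 1000000 in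
/-- Smoothing lemma: a nonnegative Lipschitz function on `[0, ℓ]` vanishing at the endpoints
and taking the value `p` at `w` can be approximated, uniformly as `σ → 0⁺`, by `C^∞`
equi-Lipschitz functions vanishing at the endpoints and taking the value `p` at `w`. -/
theorem stmt_0 (ℓ p w : ℝ) (hℓ : 0 < ℓ) (hp : 0 ≤ p) (hw : w ∈ Icc 0 ℓ)
    (φ : ℝ → ℝ) (K₀ : NNReal) (hφlip : LipschitzOnWith K₀ φ (Icc 0 ℓ))
    (hφnonneg : ∀ s ∈ Icc 0 ℓ, 0 ≤ φ s)
    (h0 : φ 0 = 0) (hend : φ ℓ = 0) (hwp : φ w = p) :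
    ∃ (K : NNReal) (F : ℝ → ℝ → ℝ),
      (∀ σ > (0:ℝ), ContDiffOn ℝ (⊤ : ℕ∞) (F σ) (Icc 0 ℓ) ∧ LipschitzOnWith K (F σ) (Icc 0 ℓ) ∧
        F σ 0 = 0 ∧ F σ ℓ = 0 ∧ F σ w = p) ∧
      TendstoUniformlyOn F φ (nhdsWithin 0 (Ioi 0)) (Icc 0 ℓ) := by
  -- Extend φ to a globally Lipschitz function
  obtain ⟨φe, hφe_lip, hφe_eq⟩ := hφlip.extend_real
  have h0mem : (0:ℝ) ∈ Icc (0:ℝ) ℓ := ⟨le_refl _, hℓ.le⟩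
  have hℓmem : ℓ ∈ Icc (0:ℝ) ℓ := ⟨hℓ.le, le_refl _⟩
  -- Bump function B
  obtain ⟨B, M, hM0, hBa, hB0, hBℓ, hBw_or, hBlip⟩ :
      ∃ (B : ℝ → ℝ) (M : ℝ), 0 ≤ M ∧ AnalyticOnNhd ℝ B Set.univ ∧ B 0 = 0 ∧ B ℓ = 0 ∧
        (B w = 1 ∨ (p = 0 ∧ (w = 0 ∨ w = ℓ))) ∧
        ∀ x ∈ Icc (0:ℝ) ℓ, ∀ y ∈ Icc (0:ℝ) ℓ, |B x - B y| ≤ M * |x - y| := by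
    by_cases hint : 0 < w ∧ w < ℓ
    · have hd : 0 < w * (ℓ - w) := mul_pos hint.1 (by linarith [hint.2])
      refine ⟨fun x => x * (ℓ - x) * (w * (ℓ - w))⁻¹, ℓ * (w * (ℓ - w))⁻¹,
        by positivity, ?_, by simp, by simp, Or.inl ?_, ?_⟩
      · exact ((analyticOnNhd_id.mul (analyticOnNhd_const.sub analyticOnNhd_id)).mul
          analyticOnNhd_const)
      · field_simp
        exact div_self hd.ne'
      · intro x hx y hy
        have key : x * (ℓ - x) * (w * (ℓ - w))⁻¹ - y * (ℓ - y) * (w * (ℓ - w))⁻¹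
            = ((x - y) * (ℓ - x - y)) * (w * (ℓ - w))⁻¹ := by ring
        rw [key, abs_mul, abs_mul]
        have h1 : |ℓ - x - y| ≤ ℓ := by
          rw [abs_le]
          constructor <;> [linarith [hx.2, hy.2]; linarith [hx.1, hy.1]]
        have h2 : |(w * (ℓ - w))⁻¹| = (w * (ℓ - w))⁻¹ := abs_of_pos (by positivity)
        rw [h2]
        have h3 : (0:ℝ) < (w * (ℓ - w))⁻¹ := by positivity
        calc |x - y| * |ℓ - x - y| * (w * (ℓ - w))⁻¹
            ≤ |x - y| * ℓ * (w * (ℓ - w))⁻¹ :=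
              mul_le_mul_of_nonneg_right
                (mul_le_mul_of_nonneg_left h1 (abs_nonneg _)) h3.le
          _ = ℓ * (w * (ℓ - w))⁻¹ * |x - y| := by ring
    · have hw' : w = 0 ∨ w = ℓ := by
        rcases eq_or_lt_of_le hw.1 with h | h
        · exact Or.inl h.symm
        · rcases eq_or_lt_of_le hw.2 with h2 | h2
          · exact Or.inr h2
          · exact absurd ⟨h, h2⟩ hint
      have hp0 : p = 0 := by
        rcases hw' with rfl | rfl
        · rw [← hwp, h0]
        · rw [← hwp, hend]
      exact ⟨fun _ => 0, 0, le_refl _, analyticOnNhd_const, rfl, rfl,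
        Or.inr ⟨hp0, hw'⟩, by intro x _ y _; simp⟩
  -- Constants
  set E : ℝ := (K₀ : ℝ) + ℓ with hE
  have hE0 : 0 < E := by positivity
  set CC : ℝ := 2 * E * (1 + M * ℓ) with hCC
  have hCC0 : 0 ≤ CC := by positivity
  set R : ℝ := ((K₀ : ℝ) + 1) + 2 * E * ℓ⁻¹ + 2 * E * M with hR
  have hR0 : 0 ≤ R := by positivity
  -- Key per-σ construction
  have key : ∀ σ : ℝ, 0 < σ → ∃ G : ℝ → ℝ,
      ContDiffOn ℝ (⊤ : ℕ∞) G (Icc 0 ℓ) ∧ LipschitzOnWith R.toNNReal G (Icc 0 ℓ) ∧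
      G 0 = 0 ∧ G ℓ = 0 ∧ G w = p ∧ ∀ x ∈ Icc (0:ℝ) ℓ, |G x - φ x| ≤ CC * min σ 1 := by
    intro σ hσ
    set σ' : ℝ := min σ 1 with hσ'def
    have hσ'pos : 0 < σ' := lt_min hσ one_pos
    have hσ'le1 : σ' ≤ 1 := min_le_right _ _
    obtain ⟨P, hPa, hPlip, hPclose⟩ := poly_approx K₀ φe hφe_lip
      (fun τ hτ => smooth_approx K₀ φe hφe_lip hτ) ℓ hℓ hσ'pos
    set e : ℝ := E * σ' with he
    have he0 : 0 ≤ e := by positivity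
    have heE : e ≤ E := by nlinarith
    have hPφ : ∀ x ∈ Icc (0:ℝ) ℓ, |P x - φ x| ≤ e := by
      intro x hx
      rw [hφe_eq hx]
      exact hPclose x hx
    set A : ℝ → ℝ := fun x => P 0 + (P ℓ - P 0) * (x * ℓ⁻¹) with hA
    set c : ℝ := p - (P w - A w) with hc
    set G : ℝ → ℝ := fun x => P x - A x + c * B x with hG
    have hP0 : |P 0| ≤ e := by have := hPφ 0 h0mem; rwa [h0, sub_zero] at this
    have hPℓ : |P ℓ| ≤ e := by have := hPφ ℓ hℓmem; rwa [hend, sub_zero] at this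
    have hAbd : ∀ x ∈ Icc (0:ℝ) ℓ, |A x| ≤ e := by
      intro x hx
      have ht1 : 0 ≤ x * ℓ⁻¹ := mul_nonneg hx.1 (inv_nonneg.2 hℓ.le)
      have ht2 : x * ℓ⁻¹ ≤ 1 := by
        rw [← mul_inv_cancel₀ hℓ.ne']
        exact mul_le_mul_of_nonneg_right hx.2 (inv_nonneg.2 hℓ.le)
      simp only [hA]
      rw [abs_le] at hP0 hPℓ ⊢
      constructor <;>
        nlinarith [mul_nonneg (by linarith [hP0.2] : (0:ℝ) ≤ e - P 0)
            (by linarith : (0:ℝ) ≤ 1 - x * ℓ⁻¹),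
          mul_nonneg (by linarith [hPℓ.2] : (0:ℝ) ≤ e - P ℓ) ht1,
          mul_nonneg (by linarith [hP0.1] : (0:ℝ) ≤ P 0 + e)
            (by linarith : (0:ℝ) ≤ 1 - x * ℓ⁻¹),
          mul_nonneg (by linarith [hPℓ.1] : (0:ℝ) ≤ P ℓ + e) ht1]
    have hcbd : |c| ≤ 2 * e := by
      have h1 : |p - P w| ≤ e := by
        rw [← hwp, abs_sub_comm]
        exact hPφ w hw
      have h2 : |A w| ≤ e := hAbd w hw
      calc |c| = |(p - P w) + A w| := by rw [hc]; ring_nf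
        _ ≤ |p - P w| + |A w| := abs_add_le _ _
        _ ≤ 2 * e := by linarith
    have hBbd : ∀ x ∈ Icc (0:ℝ) ℓ, |B x| ≤ M * ℓ := by
      intro x hx
      have := hBlip x hx 0 h0mem
      rw [hB0, sub_zero, sub_zero] at this
      have hxa : |x| ≤ ℓ := by rw [abs_of_nonneg hx.1]; exact hx.2
      calc |B x| ≤ M * |x| := this
        _ ≤ M * ℓ := mul_le_mul_of_nonneg_left hxa hM0
    have hG0 : G 0 = 0 := by
      simp only [hG, hA, hB0, mul_zero, zero_mul, add_zero, mul_one]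
      ring
    have hGℓ : G ℓ = 0 := by
      have hll : ℓ * ℓ⁻¹ = (1:ℝ) := mul_inv_cancel₀ hℓ.ne'
      simp only [hG, hA, hBℓ, hll, mul_zero, add_zero, mul_one]
      ring
    refine ⟨G, ?_, ?_, hG0, hGℓ, ?_, ?_⟩
    · -- smoothness
      have hAa : AnalyticOnNhd ℝ A Set.univ :=
        analyticOnNhd_const.add (analyticOnNhd_const.mul (analyticOnNhd_id.mul analyticOnNhd_const))
      have hGa : AnalyticOnNhd ℝ G Set.univ :=
        (hPa.sub hAa).add (analyticOnNhd_const.mul hBa)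
      exact (hGa.mono (subset_univ _)).contDiffOn (uniqueDiffOn_Icc hℓ)
    · -- Lipschitz
      rw [lipschitzOnWith_iff_dist_le_mul]
      intro x hx y hy
      rw [Real.dist_eq, Real.dist_eq, Real.coe_toNNReal _ hR0]
      have hPxy : |P x - P y| ≤ ((K₀ : ℝ) + 1) * |x - y| := by
        have := (lipschitzOnWith_iff_dist_le_mul.mp hPlip) x hx y hy
        rw [Real.dist_eq, Real.dist_eq] at this
        calc |P x - P y| ≤ ((K₀ + 1 : NNReal) : ℝ) * |x - y| := this
          _ = ((K₀ : ℝ) + 1) * |x - y| := by push_cast; ring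
      have hAxy : |A x - A y| ≤ 2 * E * ℓ⁻¹ * |x - y| := by
        have hkey : A x - A y = (P ℓ - P 0) * (x - y) * ℓ⁻¹ := by rw [hA]; ring
        rw [hkey, abs_mul, abs_mul]
        have h1 : |P ℓ - P 0| ≤ 2 * e := by
          calc |P ℓ - P 0| ≤ |P ℓ| + |P 0| := abs_sub _ _
            _ ≤ 2 * e := by linarith
        have h2 : |ℓ⁻¹| = ℓ⁻¹ := abs_of_pos (by positivity)
        rw [h2]
        have h3 : (0:ℝ) ≤ ℓ⁻¹ := by positivity
        calc |P ℓ - P 0| * |x - y| * ℓ⁻¹ ≤ (2 * e) * |x - y| * ℓ⁻¹ := by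
              gcongr
          _ ≤ (2 * E) * |x - y| * ℓ⁻¹ := by gcongr
          _ = 2 * E * ℓ⁻¹ * |x - y| := by ring
      have hBxy : |c * (B x - B y)| ≤ 2 * E * M * |x - y| := by
        rw [abs_mul]
        have h1 := hBlip x hx y hy
        calc |c| * |B x - B y| ≤ (2 * E) * (M * |x - y|) :=
              mul_le_mul (hcbd.trans (by linarith)) h1 (abs_nonneg _) (by positivity)
          _ = 2 * E * M * |x - y| := by ring
      have hkey : G x - G y = (P x - P y) - (A x - A y) + c * (B x - B y) := by
        rw [hG]; ring
      calc |G x - G y| ≤ |P x - P y| + |A x - A y| + |c * (B x - B y)| := by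
            rw [hkey]
            exact (abs_add_le _ _).trans (add_le_add_left (abs_sub _ _) _)
        _ ≤ ((K₀ : ℝ) + 1) * |x - y| + 2 * E * ℓ⁻¹ * |x - y| + 2 * E * M * |x - y| :=
            add_le_add (add_le_add hPxy hAxy) hBxy
        _ = R * |x - y| := by rw [hR]; ring
    · -- G w = p
      rcases hBw_or with hBw | ⟨hp0, hw'⟩
      · simp only [hG, hBw, mul_one, hc]
        ring
      · rw [hp0]
        rcases hw' with h | h
        · rw [h]; exact hG0
        · rw [h]; exact hGℓ
    · -- error bound
      intro x hx
      have h1 : |P x - φ x| ≤ e := hPφ x hx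
      have h2 : |A x| ≤ e := hAbd x hx
      have h3 : |c * B x| ≤ 2 * e * (M * ℓ) := by
        rw [abs_mul]
        have := hBbd x hx
        nlinarith [abs_nonneg c, abs_nonneg (B x)]
      have hkey : G x - φ x = (P x - φ x) - A x + c * B x := by rw [hG]; ring
      calc |G x - φ x| ≤ |P x - φ x| + |A x| + |c * B x| := by
            rw [hkey]
            exact (abs_add_le _ _).trans (add_le_add_left (abs_sub _ _) _)
        _ ≤ e + e + 2 * e * (M * ℓ) := by linarith
        _ = CC * σ' := by rw [hCC, he]; ring
  -- choose and conclude
  choose! G hG1 hG2 hG3 hG4 hG5 hG6 using key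
  refine ⟨R.toNNReal, G, fun σ hσ => ⟨hG1 σ hσ, hG2 σ hσ, hG3 σ hσ, hG4 σ hσ, hG5 σ hσ⟩, ?_⟩
  rw [Metric.tendstoUniformlyOn_iff]
  intro ε hε
  set δ : ℝ := min 1 (ε / (CC + 1)) with hδ
  have hδpos : 0 < δ := lt_min one_pos (by positivity)
  filter_upwards [Ioo_mem_nhdsGT_of_mem (show (0:ℝ) ∈ Ico 0 δ from ⟨le_refl _, hδpos⟩)]
    with σ hσIoo
  intro x hx
  rw [Real.dist_eq]
  have hσpos : 0 < σ := hσIoo.1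
  have hσδ : σ < δ := hσIoo.2
  have hb := hG6 σ hσpos x hx
  have h1 : CC * min σ 1 ≤ CC * σ := mul_le_mul_of_nonneg_left (min_le_left _ _) hCC0
  have h2 : σ ≤ ε / (CC + 1) := (hσδ.le.trans (min_le_right _ _))
  have h3 : CC * σ ≤ CC * (ε / (CC + 1)) := mul_le_mul_of_nonneg_left h2 hCC0
  have h4 : CC * (ε / (CC + 1)) < ε := by
    have hpos : (0:ℝ) < CC + 1 := by linarith
    have heq : CC * (ε / (CC + 1)) = (CC / (CC + 1)) * ε := by ring
    have hlt : CC / (CC + 1) < 1 := by rw [div_lt_one hpos]; linarith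
    rw [heq]
    nlinarith
  have h5 : |φ x - G σ x| = |G σ x - φ x| := abs_sub_comm _ _
  rw [h5]
  linarith
end

section
/- Let L > 0 and let ψ : [0,L] → ℝ be Lipschitz with ψ(0) = ψ(L) = 0, and suppose its derivative satisfies ψ'(t) ≥ −c̃ almost everywhere, where c̃ ≥ 0. Then the length of the graph of ψ satisfies ∫₀^L √(1 + ψ'(t)²) dt ≤ L + 2 L c̃. -/
/-!
Since `ψ` is Lipschitz, it is absolutely continuous, so `∫₀^L ψ' = ψ L - ψ 0 = 0`. Together with
`|x| ≤ x + 2 c̃` for `x ≥ -c̃`, this gives `∫ |ψ'| ≤ 2 L c̃`, and `√(1 + x²) ≤ 1 + |x|` finishes.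
-/

open Set MeasureTheory

namespace intervalIntegral

variable {f : ℝ → ℝ} {a b : ℝ}

theorem integral_sqrt_one_add_sq_le (hab : a ≤ b) (hf : IntervalIntegrable f volume a b) :
    ∫ t in a..b, √(1 + f t ^ 2) ≤ (b - a) + ∫ t in a..b, |f t| := by
  have hbound : ∀ t, √(1 + f t ^ 2) ≤ 1 + |f t| := fun t => by
    simpa only [Real.norm_eq_abs, sq_abs] using sqrt_one_add_norm_sq_le (f t)
  have hdom : IntervalIntegrable (fun t => 1 + |f t|) volume a b :=
    intervalIntegrable_const.add hf.abs
  have hsqrt : IntervalIntegrable (fun t => √(1 + f t ^ 2)) volume a b := by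
    refine hdom.mono_fun ?_ (Filter.Eventually.of_forall fun t => ?_)
    · exact (by fun_prop : Continuous fun x : ℝ => √(1 + x ^ 2)).comp_aestronglyMeasurable
        hf.def'.aestronglyMeasurable
    · simpa [Real.norm_eq_abs, abs_of_nonneg (Real.sqrt_nonneg _),
        abs_of_nonneg (by positivity : 0 ≤ 1 + |f t|)] using hbound t
  calc ∫ t in a..b, √(1 + f t ^ 2)
      ≤ ∫ t in a..b, (1 + |f t|) := integral_mono_on hab hsqrt hdom fun t _ => hbound t
    _ = (b - a) + ∫ t in a..b, |f t| := by
      rw [integral_add intervalIntegrable_const hf.abs, integral_const, smul_eq_mul, mul_one]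

theorem integral_abs_le_of_ae_neg_le {c : ℝ} (hab : a ≤ b) (hc : 0 ≤ c)
    (hf : IntervalIntegrable f volume a b)
    (hlow : ∀ᵐ t ∂volume.restrict (Icc a b), -c ≤ f t) :
    ∫ t in a..b, |f t| ≤ (∫ t in a..b, f t) + 2 * c * (b - a) := by
  have hpt : (fun t => |f t|) ≤ᵐ[volume.restrict (Icc a b)] fun t => f t + 2 * c := by
    filter_upwards [hlow] with t ht
    rw [abs_le]
    constructor <;> linarith
  calc ∫ t in a..b, |f t|
      ≤ ∫ t in a..b, (f t + 2 * c) :=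
        integral_mono_ae_restrict hab hf.abs (hf.add intervalIntegrable_const) hpt
    _ = (∫ t in a..b, f t) + 2 * c * (b - a) := by
      rw [integral_add hf intervalIntegrable_const, integral_const, smul_eq_mul, mul_comm (b - a)]

end intervalIntegral

open intervalIntegral in
/-- Length estimate for graphs of Lipschitz functions vanishing at both endpoints with a
one-sided slope bound: if `ψ : [0,L] → ℝ` is Lipschitz, `ψ(0) = ψ(L) = 0`, and
`ψ'(t) ≥ −c̃` a.e. with `c̃ ≥ 0`, then `∫₀^L √(1 + ψ'(t)²) dt ≤ L + 2 L c̃`. -/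
theorem stmt_7 (L ctil : ℝ) (hL : 0 < L) (hc : 0 ≤ ctil)
    (ψ : ℝ → ℝ) (K : NNReal) (hψ : LipschitzOnWith K ψ (Icc 0 L))
    (h0 : ψ 0 = 0) (hLval : ψ L = 0)
    (hlow : ∀ᵐ t ∂(volume.restrict (Icc (0:ℝ) L)), -ctil ≤ deriv ψ t) :
    ∫ t in (0:ℝ)..L, Real.sqrt (1 + (deriv ψ t) ^ 2) ≤ L + 2 * L * ctil := by
  have hac : AbsolutelyContinuousOnInterval ψ 0 L := by
    rw [← uIcc_of_le hL.le] at hψ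
    exact hψ.absolutelyContinuousOnInterval
  have hint : IntervalIntegrable (deriv ψ) volume 0 L := hac.intervalIntegrable_deriv
  have hftc : ∫ t in (0:ℝ)..L, deriv ψ t = 0 := by
    rw [hac.integral_deriv_eq_sub, h0, hLval, sub_self]
  have hlength := integral_sqrt_one_add_sq_le hL.le hint
  have habs := integral_abs_le_of_ae_neg_le hL.le hc hint hlow
  linarith
end

section
/- Let T ⊂ ℝ² be a closed triangle with vertices α₁, α₂, α₃, let p ∈ T, and let γ : [0,1] → T be a piecewise linear curve from α₁ to p whose tangent vector (wherever defined) lies in the closed convex cone spanned by the inward unit normals n₁₂ and n₃₁ to the sides α₁α₂ and α₃α₁. If the angle of T at α₁ is at most π/2, then the length of γ is bounded by |α₁ − p|(1 + 2·tan(π/2 − θ₁/2)), where θ₁ is the angle of T at α₁. -/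
/-!
Writing each step of the curve as `s • n₁₂ + t • n₃₁` with `s, t ≥ 0` bounds its length by
`s + t`, so the total length is at most `S + T`, where `p - α₁ = S • n₁₂ + T • n₃₁`. The inward
normals at `α₁` make the supplementary angle `π - θ₁`, and for vectors at angle `φ` one has
`‖x + y‖ ≥ (‖x‖ + ‖y‖) cos (φ / 2)`; hence `(S + T) sin (θ₁ / 2) ≤ ‖p - α₁‖`. It remains to note
that `1 / sin (θ₁ / 2) ≤ 1 + 2 cot (θ₁ / 2)`, i.e. `sin x + 2 cos x ≥ sin² x + cos² x = 1` for
`x = θ₁ / 2 ∈ (0, π / 2]`.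
-/

open Real Module
open scoped RealInnerProductSpace

theorem Fin.sum_succ_sub_castSucc {E : Type*} [AddCommGroup E] {n : ℕ} (v : Fin (n + 1) → E) :
    ∑ i : Fin n, (v i.succ - v i.castSucc) = v (Fin.last n) - v 0 := by
  have h := (Fin.sum_univ_succ v).symm.trans (Fin.sum_univ_castSucc v)
  rw [Finset.sum_sub_distrib, sub_eq_sub_iff_add_eq_add, add_comm, h, add_comm]

theorem exists_sub_eq_smul_add_smul_and_sum_norm_le {E : Type*} [SeminormedAddCommGroup E]
    [NormedSpace ℝ E] {x y : E} (hx : ‖x‖ ≤ 1) (hy : ‖y‖ ≤ 1) {n : ℕ} (v : Fin (n + 1) → E)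
    (hcone : ∀ i : Fin n, ∃ s t : ℝ, 0 ≤ s ∧ 0 ≤ t ∧ v i.succ - v i.castSucc = s • x + t • y) :
    ∃ S T : ℝ, v (Fin.last n) - v 0 = S • x + T • y ∧
      ∑ i : Fin n, ‖v i.succ - v i.castSucc‖ ≤ S + T := by
  choose s t hs ht hst using hcone
  refine ⟨∑ i, s i, ∑ i, t i, ?_, ?_⟩
  · rw [← Fin.sum_succ_sub_castSucc, Finset.sum_congr rfl fun i _ => hst i,
      Finset.sum_add_distrib, Finset.sum_smul, Finset.sum_smul]
  · rw [← Finset.sum_add_distrib]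
    refine Finset.sum_le_sum fun i _ => ?_
    calc ‖v i.succ - v i.castSucc‖ = ‖s i • x + t i • y‖ := by rw [hst i]
      _ ≤ s i * ‖x‖ + t i * ‖y‖ := by
        grw [norm_add_le, norm_smul, norm_smul, Real.norm_of_nonneg (hs i),
          Real.norm_of_nonneg (ht i)]
      _ ≤ s i + t i :=
        add_le_add (mul_le_of_le_one_right (hs i) hx) (mul_le_of_le_one_right (ht i) hy)

section InnerProductSpace

variable {V : Type*} [NormedAddCommGroup V] [InnerProductSpace ℝ V]

theorem mul_cos_half_angle_le_norm_smul_add_smul (x y : V) (S T : ℝ) :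
    (S * ‖x‖ + T * ‖y‖) * cos (InnerProductGeometry.angle x y / 2) ≤ ‖S • x + T • y‖ := by
  set c := cos (InnerProductGeometry.angle x y)
  have hcos : cos (InnerProductGeometry.angle x y / 2) ^ 2 = (1 + c) / 2 := by
    rw [cos_sq, mul_div_cancel₀ _ two_ne_zero]; ring
  have hnorm : ‖S • x + T • y‖ ^ 2 =
      (S * ‖x‖) ^ 2 + (T * ‖y‖) ^ 2 + 2 * (S * ‖x‖) * (T * ‖y‖) * c := by
    rw [norm_add_sq_real, norm_smul, norm_smul, real_inner_smul_left, real_inner_smul_right,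
      ← InnerProductGeometry.cos_angle_mul_norm_mul_norm, Real.norm_eq_abs, Real.norm_eq_abs,
      mul_pow, mul_pow, sq_abs, sq_abs]
    ring
  refine (le_abs_self _).trans (abs_le_of_sq_le_sq ?_ (norm_nonneg _))
  -- the difference of the two sides is `(1 - c) (S‖x‖ - T‖y‖)² / 2`
  rw [mul_pow, hcos, hnorm]
  nlinarith [cos_le_one (InnerProductGeometry.angle x y), sq_nonneg (S * ‖x‖ - T * ‖y‖)]

theorem angle_pos_of_inner_eq_zero_of_inner_pos {n a b : V} (ha : ⟪n, a⟫ = 0)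
    (hb : 0 < ⟪n, b⟫) : 0 < InnerProductGeometry.angle a b := by
  refine (InnerProductGeometry.angle_nonneg a b).lt_of_ne' fun h => ?_
  obtain ⟨-, r, -, rfl⟩ := InnerProductGeometry.angle_eq_zero_iff.mp h
  rw [real_inner_smul_right, ha, mul_zero] at hb
  exact hb.false

variable [Fact (finrank ℝ V = 2)]

theorem inner_eq_neg_cos_angle_of_inner_eq_zero {a b n m : V}
    (hn : ‖n‖ = 1) (hna : ⟪n, a⟫ = 0) (hnb : 0 < ⟪n, b⟫)
    (hm : ‖m‖ = 1) (hmb : ⟪m, b⟫ = 0) (hma : 0 < ⟪m, a⟫) :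
    ⟪n, m⟫ = -cos (InnerProductGeometry.angle a b) := by
  have : FiniteDimensional ℝ V := .of_fact_finrank_eq_two
  let o : Orientation ℝ V (Fin 2) := (finBasisOfFinrankEq ℝ V Fact.out).orientation
  have hna' : ⟪a, n⟫ = 0 := by rw [real_inner_comm, hna]
  have hmb' : ⟪b, m⟫ = 0 := by rw [real_inner_comm, hmb]
  have ha : 0 < ‖a‖ := norm_pos_iff.mpr (by rintro rfl; simp at hma)
  have hb : 0 < ‖b‖ := norm_pos_iff.mpr (by rintro rfl; simp at hnb)
  set u := o.areaForm a n
  set w := o.areaForm b m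
  set s := o.areaForm a b
  -- `u = ±‖a‖` and `w = ±‖b‖`; the positivity hypotheses force opposite signs
  have hu : u ^ 2 = ‖a‖ ^ 2 := by
    simpa [hna', hn] using o.inner_sq_add_areaForm_sq a n
  have hw : w ^ 2 = ‖b‖ ^ 2 := by
    simpa [hmb', hm] using o.inner_sq_add_areaForm_sq b m
  have hus : u * s = ‖a‖ ^ 2 * ⟪n, b⟫ := by
    simpa [hna'] using o.inner_mul_inner_add_areaForm_mul_areaForm a n b
  have hws : w * s = -(‖b‖ ^ 2 * ⟪m, a⟫) := by
    have := o.inner_mul_inner_add_areaForm_mul_areaForm b m a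
    rw [hmb', o.areaForm_swap b a] at this
    linarith
  have huw : u * w = -(‖a‖ * ‖b‖) := by
    have hneg : u * w < 0 := by
      have : 0 < (u * s) * -(w * s) := by rw [hus, hws, neg_neg]; positivity
      nlinarith [sq_nonneg s]
    have hsq : (u * w) ^ 2 = (‖a‖ * ‖b‖) ^ 2 := by rw [mul_pow, mul_pow, hu, hw]
    rcases sq_eq_sq_iff_eq_or_eq_neg.mp hsq with h | h
    · nlinarith [mul_pos ha hb]
    · exact h
  have hnm : ‖a‖ ^ 2 * ⟪n, m⟫ = u * o.areaForm a m := by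
    simpa [hna'] using (o.inner_mul_inner_add_areaForm_mul_areaForm a n m).symm
  have ham : ‖b‖ ^ 2 * o.areaForm a m = ⟪a, b⟫ * w := by
    simpa [hmb', real_inner_comm] using (o.inner_mul_areaForm_sub b a m).symm
  rw [InnerProductGeometry.cos_angle]
  field_simp
  apply mul_left_cancel₀ (mul_pos ha hb).ne'
  linear_combination ‖b‖ ^ 2 * hnm + u * ham + ⟪a, b⟫ * huw

theorem angle_eq_pi_sub_angle_of_inner_eq_zero {a b n m : V}
    (hn : ‖n‖ = 1) (hna : ⟪n, a⟫ = 0) (hnb : 0 < ⟪n, b⟫)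
    (hm : ‖m‖ = 1) (hmb : ⟪m, b⟫ = 0) (hma : 0 < ⟪m, a⟫) :
    InnerProductGeometry.angle n m = π - InnerProductGeometry.angle a b := by
  rw [InnerProductGeometry.angle, hn, hm, mul_one, div_one,
    inner_eq_neg_cos_angle_of_inner_eq_zero hn hna hnb hm hmb hma, arccos_neg,
    arccos_cos (InnerProductGeometry.angle_nonneg a b) (InnerProductGeometry.angle_le_pi a b)]

end InnerProductSpace

theorem one_le_sin_mul_one_add_two_tan_pi_div_two_sub {x : ℝ} (h₀ : 0 < x) (h₁ : x ≤ π / 2) :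
    1 ≤ sin x * (1 + 2 * tan (π / 2 - x)) := by
  have hsin : 0 < sin x := sin_pos_of_pos_of_lt_pi h₀ (by linarith [pi_pos])
  have hcos : 0 ≤ cos x := cos_nonneg_of_mem_Icc ⟨by linarith, h₁⟩
  have h : sin x * (1 + 2 * tan (π / 2 - x)) = sin x + 2 * cos x := by
    rw [tan_pi_div_two_sub, tan_eq_sin_div_cos, inv_div]
    field_simp
  rw [h]
  nlinarith [sin_sq_add_cos_sq x, sin_le_one x, cos_le_one x]

theorem stmt_9_general (α₁ α₂ α₃ p : ℂ)
    (n₁₂ n₃₁ : ℂ)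
    (hn12unit : ‖n₁₂‖ = 1) (hn12perp : (inner ℝ n₁₂ (α₂ - α₁) : ℝ) = 0)
    (hn12in : (0:ℝ) < inner ℝ n₁₂ (α₃ - α₁))
    (hn31unit : ‖n₃₁‖ = 1) (hn31perp : (inner ℝ n₃₁ (α₁ - α₃) : ℝ) = 0)
    (hn31in : (0:ℝ) < inner ℝ n₃₁ (α₂ - α₃))
    (θ₁ : ℝ) (hθ₁ : θ₁ = InnerProductGeometry.angle (α₂ - α₁) (α₃ - α₁))
    (n : ℕ) (v : Fin (n + 1) → ℂ) (hv0 : v 0 = α₁) (hvn : v (Fin.last n) = p)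
    -- each tangent vector lies in the closed convex cone spanned by `n₁₂` and `n₃₁`
    (hcone : ∀ i : Fin n, ∃ s t : ℝ, 0 ≤ s ∧ 0 ≤ t ∧
      v i.succ - v i.castSucc = s • n₁₂ + t • n₃₁) :
    ∑ i : Fin n, ‖v i.succ - v i.castSucc‖ ≤
      ‖α₁ - p‖ * (1 + 2 * Real.tan (Real.pi / 2 - θ₁ / 2)) := by
  have := Complex.finrank_real_complex_fact
  have hn31perp' : ⟪n₃₁, α₃ - α₁⟫ = 0 := by rw [← neg_sub, inner_neg_right, hn31perp, neg_zero]
  have hn31in' : 0 < ⟪n₃₁, α₂ - α₁⟫ := by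
    rwa [← sub_add_sub_cancel α₂ α₃ α₁, inner_add_right, hn31perp', add_zero]
  have hθ₁pos : 0 < θ₁ := hθ₁ ▸ angle_pos_of_inner_eq_zero_of_inner_pos hn12perp hn12in
  have hθ₁le : θ₁ ≤ π := hθ₁ ▸ InnerProductGeometry.angle_le_pi _ _
  have hnormals : InnerProductGeometry.angle n₁₂ n₃₁ = π - θ₁ := hθ₁ ▸
    angle_eq_pi_sub_angle_of_inner_eq_zero hn12unit hn12perp hn12in hn31unit hn31perp' hn31in'
  obtain ⟨S, T, hp, hlength⟩ :=
    exists_sub_eq_smul_add_smul_and_sum_norm_le hn12unit.le hn31unit.le v hcone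
  have hST : (S + T) * sin (θ₁ / 2) ≤ ‖α₁ - p‖ := by
    have := mul_cos_half_angle_le_norm_smul_add_smul n₁₂ n₃₁ S T
    rwa [hn12unit, hn31unit, mul_one, mul_one, hnormals, sub_div, cos_pi_div_two_sub, ← hp,
      hv0, hvn, norm_sub_rev] at this
  have hcot := one_le_sin_mul_one_add_two_tan_pi_div_two_sub (half_pos hθ₁pos) (by linarith)
  have hlength_nonneg : 0 ≤ S + T := (Finset.sum_nonneg fun i _ => norm_nonneg _).trans hlength
  calc ∑ i : Fin n, ‖v i.succ - v i.castSucc‖ ≤ S + T := hlength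
    _ ≤ (S + T) * sin (θ₁ / 2) * (1 + 2 * tan (π / 2 - θ₁ / 2)) := by
      rw [mul_assoc]; exact le_mul_of_one_le_right hlength_nonneg hcot
    _ ≤ ‖α₁ - p‖ * (1 + 2 * tan (π / 2 - θ₁ / 2)) := by
      gcongr
      linarith [tan_nonneg_of_nonneg_of_le_pi_div_two (x := π / 2 - θ₁ / 2) (by linarith)
        (by linarith)]

/-- Length bound for a piecewise linear curve from a vertex `α₁` of a triangle `T ⊆ ℂ ≅ ℝ²`
to a point `p ∈ T`, whose tangent vectors lie in the closed convex cone spanned by the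
inward unit normals `n₁₂`, `n₃₁` to the sides `α₁α₂` and `α₃α₁`.  If the angle `θ₁` of `T`
at `α₁` is at most `π/2`, the length of the curve is bounded by
`|α₁ − p| (1 + 2 tan(π/2 − θ₁/2))`. -/
theorem stmt_9 (α₁ α₂ α₃ p : ℂ)
    (hT : ¬ Collinear ℝ ({α₁, α₂, α₃} : Set ℂ))
    (hp : p ∈ convexHull ℝ ({α₁, α₂, α₃} : Set ℂ))
    (n₁₂ n₃₁ : ℂ)
    (hn12unit : ‖n₁₂‖ = 1) (hn12perp : (inner ℝ n₁₂ (α₂ - α₁) : ℝ) = 0)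
    (hn12in : (0:ℝ) < inner ℝ n₁₂ (α₃ - α₁))
    (hn31unit : ‖n₃₁‖ = 1) (hn31perp : (inner ℝ n₃₁ (α₁ - α₃) : ℝ) = 0)
    (hn31in : (0:ℝ) < inner ℝ n₃₁ (α₂ - α₃))
    (θ₁ : ℝ) (hθ₁ : θ₁ = InnerProductGeometry.angle (α₂ - α₁) (α₃ - α₁))
    (hacute : θ₁ ≤ Real.pi / 2)
    (n : ℕ) (v : Fin (n + 1) → ℂ) (hv0 : v 0 = α₁) (hvn : v (Fin.last n) = p)
    (hvT : ∀ i, v i ∈ convexHull ℝ ({α₁, α₂, α₃} : Set ℂ))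
    -- each tangent vector lies in the closed convex cone spanned by `n₁₂` and `n₃₁`
    (hcone : ∀ i : Fin n, ∃ s t : ℝ, 0 ≤ s ∧ 0 ≤ t ∧
      v i.succ - v i.castSucc = s • n₁₂ + t • n₃₁) :
    ∑ i : Fin n, ‖v i.succ - v i.castSucc‖ ≤
      ‖α₁ - p‖ * (1 + 2 * Real.tan (Real.pi / 2 - θ₁ / 2)) :=
  stmt_9_general α₁ α₂ α₃ p n₁₂ n₃₁ hn12unit hn12perp hn12in hn31unit hn31perp hn31in θ₁ hθ₁ n v hv0
    hvn hcone
end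

section
/- Let ζ¹, w^a, w^c ∈ ℝ² be three non-collinear points, and let Ψ : [ζ¹, w^a] → [ζ¹, w^c] be a bi-Lipschitz bijection between the two segments with Ψ(ζ¹) = ζ¹ and Ψ(w^a) = w^c, which is monotone along the segments (i.e., if S lies between ζ¹ and Q on [ζ¹, w^a] then Ψ(S) lies between ζ¹ and Ψ(Q)). Then the family of segments {[Q, Ψ(Q)] : Q ∈ [ζ¹, w^a]} covers the closed triangle with vertices ζ¹, w^a, w^c, and any two distinct such segments intersect at most in ζ¹. -/
/-!
Parametrize the two sides by `t ↦ lineMap ζ wa t` and `u ↦ lineMap ζ wc u`. Then `Ψ` becomes a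
monotone bijection `f` of `[0, 1]` fixing `0` and `1`, which is therefore continuous. In the affine
frame `(ζ; wa - ζ, wc - ζ)` the segment `[Q(t), Ψ Q(t)]` is `{((1 - s) t, s f(t)) | s ∈ [0, 1]}`.
A point `(β, γ)` of the triangle lies on it when `(t - β) f(t) = γ t`, which the intermediate
value theorem solves; and for `q < s` the segment through `q` lies strictly below the one through
`s`, because `f q < f s`.
-/

open Set AffineMap

theorem MonotoneOn.continuousOn_of_surjOn_Icc {α β : Type*} [LinearOrder α] [TopologicalSpace α]
    [OrderTopology α] [LinearOrder β] [TopologicalSpace β] [OrderTopology β] [DenselyOrdered β]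
    {f : α → β} {a b : α} {c d : β} (hf : MonotoneOn f (Icc a b))
    (hmaps : MapsTo f (Icc a b) (Icc c d)) (hsurj : SurjOn f (Icc a b) (Icc c d)) :
    ContinuousOn f (Icc a b) := by
  rw [continuousOn_iff_continuous_domRestrict]
  have : Continuous (hmaps.restrict f (Icc a b) (Icc c d)) :=
    Monotone.continuous_of_surjective (fun x y hxy => hf x.2 y.2 hxy)
      (hmaps.restrict_surjective_iff.2 hsurj)
  exact continuous_subtype_val.comp this

theorem exists_one_sub_mul_eq_and_mul_eq {f : ℝ → ℝ} (hf : ContinuousOn f (Icc 0 1))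
    (hf0 : f 0 = 0) (hf1 : f 1 = 1) {β γ : ℝ} (hβ : 0 ≤ β) (hγ : 0 ≤ γ) (hβγ : β + γ ≤ 1) :
    ∃ t ∈ Icc (0 : ℝ) 1, ∃ s ∈ Icc (0 : ℝ) 1, (1 - s) * t = β ∧ s * f t = γ := by
  -- for `β = 0` the function used below vanishes at `t = 0`, which gives no solution
  rcases hβ.eq_or_lt with rfl | hβ
  · obtain ⟨t, ht, hft⟩ := intermediate_value_Icc zero_le_one hf
      (show γ ∈ Icc (f 0) (f 1) by rw [hf0, hf1]; constructor <;> linarith)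
    exact ⟨t, ht, 1, right_mem_Icc.2 zero_le_one, by ring, by rw [hft, one_mul]⟩
  -- `(β, γ)` lies on the segment from `(t, 0)` to `(0, f t)` iff `(t - β) f t = γ t`
  have hφ : ContinuousOn (fun t => (t - β) * f t - γ * t) (Icc β 1) :=
    ((continuousOn_id.sub continuousOn_const).mul (hf.mono (Icc_subset_Icc hβ.le le_rfl))).sub
      (continuousOn_const.mul continuousOn_id)
  obtain ⟨t, ⟨hβt, ht1⟩, hφt⟩ := intermediate_value_Icc (by linarith) hφ
    (show (0 : ℝ) ∈ Icc ((β - β) * f β - γ * β) ((1 - β) * f 1 - γ * 1) by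
      rw [hf1]; constructor <;> nlinarith)
  have ht : 0 < t := hβ.trans_le hβt
  refine ⟨t, ⟨ht.le, ht1⟩, 1 - β / t, ⟨?_, ?_⟩, ?_, ?_⟩
  · linarith [(div_le_one ht).2 hβt]
  · linarith [div_nonneg hβ.le ht.le]
  · field_simp
    ring
  · field_simp
    linarith

theorem mul_ne_mul_of_one_sub_mul_eq {q s a b u v : ℝ} (hq : 0 ≤ q) (hqs : q < s) (ha : 0 ≤ a)
    (hab : a < b) (hu : u ∈ Icc (0 : ℝ) 1) (hv : v ∈ Icc (0 : ℝ) 1)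
    (h : (1 - u) * q = (1 - v) * s) : u * a ≠ v * b := by
  intro h'
  obtain ⟨hu0, hu1⟩ := hu
  obtain ⟨hv0, hv1⟩ := hv
  rcases hu0.eq_or_lt with rfl | hu0
  · have : v = 0 := by nlinarith
    subst this
    linarith
  · -- `v b = u a < u b`, so `(1 - u) q ≤ (1 - u) s < (1 - v) s`
    have hvu : v < u := by nlinarith
    nlinarith

section

variable {E : Type*} [AddCommGroup E] [Module ℝ E]

theorem linearIndependent_sub_of_not_collinear {p₀ p₁ p₂ : E}
    (h : ¬Collinear ℝ ({p₀, p₁, p₂} : Set E)) : LinearIndependent ℝ ![p₁ - p₀, p₂ - p₀] := by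
  refine LinearIndependent.pair_iff.2 fun x y hxy => ?_
  by_contra hne
  apply h
  rcases not_and_or.1 hne with hx | hy
  · have : p₁ = lineMap p₀ p₂ (-y / x) := by
      rw [lineMap_apply_module', div_eq_inv_mul, mul_smul, ← sub_eq_iff_eq_add,
        eq_inv_smul_iff₀ hx]
      linear_combination (norm := module) hxy
    rw [Set.insert_comm]
    exact collinear_insert_of_mem_affineSpan_pair (this ▸ lineMap_mem_affineSpan_pair _ _ _)
  · have : p₂ = lineMap p₀ p₁ (-x / y) := by
      rw [lineMap_apply_module', div_eq_inv_mul, mul_smul, ← sub_eq_iff_eq_add,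
        eq_inv_smul_iff₀ hy]
      linear_combination (norm := module) hxy
    rw [Set.pair_comm, Set.insert_comm]
    exact collinear_insert_of_mem_affineSpan_pair (this ▸ lineMap_mem_affineSpan_pair _ _ _)

theorem lineMap_mem_segment_lineMap_iff {p w : E} (h : p ≠ w) {q s : ℝ} (hs : 0 ≤ s) :
    lineMap p w q ∈ segment ℝ p (lineMap p w s) ↔ q ∈ Icc 0 s := by
  have himage := image_segment ℝ (lineMap p w : ℝ →ᵃ[ℝ] E) 0 s
  rw [lineMap_apply_zero, segment_eq_Icc hs] at himage
  rw [← himage, (lineMap_injective ℝ h).mem_set_image]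

theorem exists_coords_of_mem_convexHull {ζ wa wc R : E}
    (hR : R ∈ convexHull ℝ ({ζ, wa, wc} : Set E)) :
    ∃ β γ : ℝ, 0 ≤ β ∧ 0 ≤ γ ∧ β + γ ≤ 1 ∧ R = ζ + β • (wa - ζ) + γ • (wc - ζ) := by
  rw [convexHull_insert (insert_nonempty _ _), convexHull_pair, mem_convexJoin] at hR
  obtain ⟨_, rfl, y, hy, hR⟩ := hR
  rw [segment_eq_image_lineMap] at hy hR
  obtain ⟨c, hc, rfl⟩ := hy
  obtain ⟨m, hm, rfl⟩ := hR
  refine ⟨m * (1 - c), m * c, by nlinarith [hm.1, hc.2], by nlinarith [hm.1, hc.1],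
    by nlinarith [hm.2], ?_⟩
  simp only [lineMap_apply_module']
  module

theorem lineMap_lineMap_lineMap (ζ wa wc : E) (t r s : ℝ) :
    lineMap (lineMap ζ wa t) (lineMap ζ wc r) s =
      ζ + ((1 - s) * t) • (wa - ζ) + (s * r) • (wc - ζ) := by
  simp only [lineMap_apply_module']
  module

theorem exists_strictMonoOn_of_bijOn_segment {ζ wa wc : E} (ha : ζ ≠ wa) (hc : ζ ≠ wc)
    {Ψ : E → E} (hbij : BijOn Ψ (segment ℝ ζ wa) (segment ℝ ζ wc))
    (hmono : ∀ Q ∈ segment ℝ ζ wa, ∀ S ∈ segment ℝ ζ wa,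
      S ∈ segment ℝ ζ Q → Ψ S ∈ segment ℝ ζ (Ψ Q)) :
    ∃ f : ℝ → ℝ, BijOn f (Icc 0 1) (Icc 0 1) ∧ StrictMonoOn f (Icc 0 1) ∧
      ∀ t ∈ Icc (0 : ℝ) 1, Ψ (lineMap ζ wa t) = lineMap ζ wc (f t) := by
  have hA : BijOn (lineMap ζ wa : ℝ → E) (Icc (0 : ℝ) 1) (segment ℝ ζ wa) := by
    rw [segment_eq_image_lineMap]; exact (lineMap_injective ℝ ha).injOn.bijOn_image
  have hC : BijOn (lineMap ζ wc : ℝ → E) (Icc (0 : ℝ) 1) (segment ℝ ζ wc) := by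
    rw [segment_eq_image_lineMap]; exact (lineMap_injective ℝ hc).injOn.bijOn_image
  set f := Function.invFunOn (lineMap ζ wc : ℝ → E) (Icc 0 1) ∘ Ψ ∘ (lineMap ζ wa : ℝ → E)
  have hf : BijOn f (Icc 0 1) (Icc 0 1) :=
    (BijOn.symm hC.invOn_invFunOn.symm hC).comp (hbij.comp hA)
  have hΨf : ∀ t ∈ Icc (0 : ℝ) 1, Ψ (lineMap ζ wa t) = lineMap ζ wc (f t) := fun t ht =>
    (hC.invOn_invFunOn.2 (hbij.mapsTo (hA.mapsTo ht))).symm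
  refine ⟨f, hf, MonotoneOn.strictMonoOn_of_injOn (fun q hq s hs hqs => ?_) hf.injOn, hΨf⟩
  have hmem := hmono _ (hA.mapsTo hs) _ (hA.mapsTo hq) <| by
    rw [lineMap_mem_segment_lineMap_iff ha hs.1]
    exact ⟨hq.1, hqs⟩
  rw [hΨf q hq, hΨf s hs, lineMap_mem_segment_lineMap_iff hc (hf.mapsTo hs).1] at hmem
  exact hmem.2

theorem exists_mem_segment_of_mem_convexHull {ζ wa wc : E} {f : ℝ → ℝ}
    (hf : ContinuousOn f (Icc 0 1)) (hf0 : f 0 = 0) (hf1 : f 1 = 1) {R : E}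
    (hR : R ∈ convexHull ℝ ({ζ, wa, wc} : Set E)) :
    ∃ t ∈ Icc (0 : ℝ) 1, R ∈ segment ℝ (lineMap ζ wa t) (lineMap ζ wc (f t)) := by
  obtain ⟨β, γ, hβ, hγ, hβγ, rfl⟩ := exists_coords_of_mem_convexHull hR
  obtain ⟨t, ht, s, hs, hβ, hγ⟩ := exists_one_sub_mul_eq_and_mul_eq hf hf0 hf1 hβ hγ hβγ
  refine ⟨t, ht, ?_⟩
  rw [← hβ, ← hγ, ← lineMap_lineMap_lineMap]
  exact lineMap_mem_segment ℝ _ _ hs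

theorem disjoint_segment_lineMap {ζ wa wc : E} (hli : LinearIndependent ℝ ![wa - ζ, wc - ζ])
    {f : ℝ → ℝ} {q s : ℝ} (hq : 0 ≤ q) (hqs : q < s) (hfq : 0 ≤ f q) (hfqs : f q < f s) :
    Disjoint (segment ℝ (lineMap ζ wa q) (lineMap ζ wc (f q)))
      (segment ℝ (lineMap ζ wa s) (lineMap ζ wc (f s))) := by
  rw [Set.disjoint_left]
  rintro _ hRq hRs
  rw [segment_eq_image_lineMap] at hRq hRs
  obtain ⟨u, hu, rfl⟩ := hRq
  obtain ⟨v, hv, huv⟩ := hRs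
  rw [lineMap_lineMap_lineMap, lineMap_lineMap_lineMap, add_assoc, add_assoc, add_right_inj] at huv
  obtain ⟨h₁, h₂⟩ := hli.eq_of_pair huv
  exact mul_ne_mul_of_one_sub_mul_eq hq hqs hfq hfqs hu hv h₁.symm h₂.symm

end

theorem stmt_10_general (ζ wa wc : ℂ)
    (hncol : ¬ Collinear ℝ ({ζ, wa, wc} : Set ℂ))
    (Ψ : ℂ → ℂ)
    (hbij : Set.BijOn Ψ (segment ℝ ζ wa) (segment ℝ ζ wc))
    (hζ : Ψ ζ = ζ) (hwa : Ψ wa = wc)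
    -- monotonicity: if `S` lies between `ζ` and `Q`, then `Ψ S` lies between `ζ` and `Ψ Q`
    (hmono : ∀ Q ∈ segment ℝ ζ wa, ∀ S ∈ segment ℝ ζ wa,
      S ∈ segment ℝ ζ Q → Ψ S ∈ segment ℝ ζ (Ψ Q)) :
    (∀ R ∈ convexHull ℝ ({ζ, wa, wc} : Set ℂ),
      ∃ Q ∈ segment ℝ ζ wa, R ∈ segment ℝ Q (Ψ Q)) ∧
    (∀ Q ∈ segment ℝ ζ wa, ∀ S ∈ segment ℝ ζ wa, Q ≠ S →
      segment ℝ Q (Ψ Q) ∩ segment ℝ S (Ψ S) ⊆ {ζ}) := by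
  have ha := ne₁₂_of_not_collinear hncol
  have hc := ne₁₃_of_not_collinear hncol
  obtain ⟨f, hfbij, hfmono, hΨf⟩ := exists_strictMonoOn_of_bijOn_segment ha hc hbij hmono
  have hf0 : f 0 = 0 := lineMap_injective ℝ hc <| by
    rw [← hΨf 0 (left_mem_Icc.2 zero_le_one), lineMap_apply_zero, lineMap_apply_zero, hζ]
  have hf1 : f 1 = 1 := lineMap_injective ℝ hc <| by
    rw [← hΨf 1 (right_mem_Icc.2 zero_le_one), lineMap_apply_one, lineMap_apply_one, hwa]
  have hfcont := hfmono.monotoneOn.continuousOn_of_surjOn_Icc hfbij.mapsTo hfbij.surjOn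
  refine ⟨fun R hR => ?_, ?_⟩
  · obtain ⟨t, ht, hRt⟩ := exists_mem_segment_of_mem_convexHull hfcont hf0 hf1 hR
    exact ⟨_, lineMap_mem_segment ℝ ζ wa ht, hΨf t ht ▸ hRt⟩
  · simp only [segment_eq_image_lineMap ℝ ζ wa, forall_mem_image]
    intro q hq s hs hqs
    rw [hΨf q hq, hΨf s hs]
    refine (Set.disjoint_iff.1 ?_).trans (empty_subset _)
    have hli := linearIndependent_sub_of_not_collinear hncol
    rcases lt_or_gt_of_ne (ne_of_apply_ne _ hqs) with h | h
    · exact disjoint_segment_lineMap hli hq.1 h (hfbij.mapsTo hq).1 (hfmono hq hs h)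
    · exact (disjoint_segment_lineMap hli hs.1 h (hfbij.mapsTo hs).1 (hfmono hs hq h)).symm

/-- Foliation of a triangle by the segments `[Q, Ψ(Q)]`, where `Ψ` is a monotone bi-Lipschitz
bijection between the sides `[ζ, wa]` and `[ζ, wc]` fixing `ζ` and sending `wa` to `wc`:
the segments cover the triangle with vertices `ζ, wa, wc`, and two distinct such segments
intersect at most in `ζ`. -/
theorem stmt_10 (ζ wa wc : ℂ)
    (hncol : ¬ Collinear ℝ ({ζ, wa, wc} : Set ℂ))
    (Ψ : ℂ → ℂ)
    (hbij : Set.BijOn Ψ (segment ℝ ζ wa) (segment ℝ ζ wc))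
    (hζ : Ψ ζ = ζ) (hwa : Ψ wa = wc)
    (K : NNReal) (hlip : LipschitzOnWith K Ψ (segment ℝ ζ wa))
    (K' : ℝ) (hK' : 0 < K')
    (hlip' : ∀ x ∈ segment ℝ ζ wa, ∀ y ∈ segment ℝ ζ wa, ‖x - y‖ ≤ K' * ‖Ψ x - Ψ y‖)
    -- monotonicity: if `S` lies between `ζ` and `Q`, then `Ψ S` lies between `ζ` and `Ψ Q`
    (hmono : ∀ Q ∈ segment ℝ ζ wa, ∀ S ∈ segment ℝ ζ wa,
      S ∈ segment ℝ ζ Q → Ψ S ∈ segment ℝ ζ (Ψ Q)) :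
    (∀ R ∈ convexHull ℝ ({ζ, wa, wc} : Set ℂ),
      ∃ Q ∈ segment ℝ ζ wa, R ∈ segment ℝ Q (Ψ Q)) ∧
    (∀ Q ∈ segment ℝ ζ wa, ∀ S ∈ segment ℝ ζ wa, Q ≠ S →
      segment ℝ Q (Ψ Q) ∩ segment ℝ S (Ψ S) ⊆ {ζ}) :=
  stmt_10_general ζ wa wc hncol Ψ hbij hζ hwa hmono
end
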